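/- Let m > 1 and N ≥ 2, and assume (H1). If u is a radial solution on [0,R) and r₀ ∈ [0,R) satisfies u'(r₀) = 0 and u(r₀) > 0, then u(r) ≤ u(r₀) for all r ∈ (r₀, R). -/

import Mathlib

open Filter Set MeasureTheory intervalIntegral

noncomputable section

/-- The half-open interval `[0, R)` inside `ℝ`, where `R : EReal` may be `∞`. -/
def domR (R : EReal) : Set ℝ := {r : ℝ | 0 ≤ r ∧ (r : EReal) < R}

/-- The filter describing `r → R⁻` inside `ℝ` (it equals `atTop` when `R = ∞`). -/
def limR (R : EReal) : Filter ℝ := Filter.comap Real.toEReal (nhdsWithin R (Set.Iio R))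

/-- Assumption (H1): `f` is continuous on `(0,∞)`, nonpositive on `(0,b]` and
positive on `(b,∞)`, with `b > 0`. -/
def H1cond (b : ℝ) (f : ℝ → ℝ) : Prop :=
  0 < b ∧ ContinuousOn f (Set.Ioi 0) ∧
    (∀ u : ℝ, 0 < u → u ≤ b → f u ≤ 0) ∧ (∀ u : ℝ, b < u → 0 < f u)

/-- `u` (with derivative `u'`) is a radial solution on `[0, R)` of
`(r^{N-1} |u'|^{m-2} u')' = - r^{N-1} f(u)`, positive, `C¹` up to the origin,
with `u'(0) = 0` and `u, u' → 0` as `r → R`. -/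
def IsRadialSolution (N : ℕ) (m : ℝ) (f : ℝ → ℝ) (R : EReal) (u u' : ℝ → ℝ) : Prop :=
  0 < R ∧
  (∀ r ∈ domR R, HasDerivWithinAt u (u' r) (domR R) r) ∧
  ContinuousOn u' (domR R) ∧
  (∀ r ∈ domR R, 0 < u r) ∧
  u' 0 = 0 ∧
  (∀ r : ℝ, 0 < r → (r : EReal) < R →
    HasDerivAt (fun s : ℝ => s ^ (N - 1) * |u' s| ^ (m - 2) * u' s)
      (-(r ^ (N - 1) * f (u r))) r) ∧
  Filter.Tendsto u (limR R) (nhds 0) ∧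
  Filter.Tendsto u' (limR R) (nhds 0)

/-- `rr` is the (strictly decreasing) inverse on `(0, α)` of a radial solution `u`,
with derivatives `rr'`, `rr''`, satisfying the transformed ODE
`(m-1) r'' = (N-1) r'²/r + f(u) |r'|^m r'`. -/
def IsInvSol (N : ℕ) (m α : ℝ) (f : ℝ → ℝ) (R : EReal) (u rr rr' rr'' : ℝ → ℝ) : Prop :=
  (∀ v ∈ Set.Ioo 0 α,
    0 < rr v ∧ (rr v : EReal) < R ∧ u (rr v) = v ∧
    HasDerivAt rr (rr' v) v ∧ rr' v < 0 ∧ HasDerivAt rr' (rr'' v) v ∧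
    (m - 1) * rr'' v = ((N : ℝ) - 1) * (rr' v) ^ 2 / rr v + f v * |rr' v| ^ m * rr' v) ∧
  (∀ x : ℝ, 0 < x → (x : EReal) < R → ∃ v ∈ Set.Ioo 0 α, rr v = x)

/-- The function `ω(u) = r(u)^{N-1} / (r'(u) |r'(u)|^{m-2})`. -/
def omegaF (N : ℕ) (m : ℝ) (rr rr' : ℝ → ℝ) (v : ℝ) : ℝ :=
  rr v ^ (N - 1) / (rr' v * |rr' v| ^ (m - 2))

/-- The function `P(u) = a u ω(u) + r(u)^N ((m-1)/m · 1/|r'(u)|^m + (a/N) u f(u))`. -/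
def PF (N : ℕ) (m a : ℝ) (f rr rr' : ℝ → ℝ) (v : ℝ) : ℝ :=
  a * v * omegaF N m rr rr' v +
    rr v ^ N * ((m - 1) / m * (1 / |rr' v| ^ m) + a / (N : ℝ) * v * f v)

/-!
Let `F` be a primitive of `f` and `E(r) = (m-1)/m |u'(r)|^m + F(u(r))` the energy of the solution;
the equation gives `E' = -(N-1)/r |u'|^m ≤ 0`. At the critical point `E(r₀) = F(u(r₀))`, while
`F(u(r)) ≤ E(r)` always. If `u(r₀) ≥ b`, then `F` is strictly increasing beyond `b`, so
`u(r) > u(r₀)` would give `E(r) ≥ F(u(r)) > F(u(r₀)) = E(r₀)`. If `u(r₀) < b`, then since `u → 0`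
there is `s > r` with `u(s) < u(r₀)`, and `F` is decreasing on `(0, b]`, so `E(s) ≥ E(r₀)`:
the energy is constant on `[r₀, s]`, which for `N ≥ 2` forces `u' = 0` there.
-/

open Topology

def flux (m a : ℝ) : ℝ := |a| ^ (m - 2) * a

lemma abs_flux {m : ℝ} (hm : m ≠ 1) (a : ℝ) : |flux m a| = |a| ^ (m - 1) := by
  rcases eq_or_ne a 0 with rfl | ha
  · simp [flux, Real.zero_rpow (sub_ne_zero.2 hm)]
  · rw [flux, abs_mul, abs_of_nonneg (Real.rpow_nonneg (abs_nonneg a) _),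
      show m - 1 = m - 2 + 1 by ring, Real.rpow_add (abs_pos.2 ha), Real.rpow_one]

lemma abs_flux_rpow_conj {m : ℝ} (hm : m ≠ 1) (a : ℝ) :
    |flux m a| ^ (m / (m - 1)) = |a| ^ m := by
  rw [abs_flux hm, ← Real.rpow_mul (abs_nonneg a), mul_div_cancel₀ _ (sub_ne_zero.2 hm)]

lemma flux_conj_flux {m : ℝ} (hm : m ≠ 1) (a : ℝ) : flux (m / (m - 1)) (flux m a) = a := by
  rcases eq_or_ne a 0 with rfl | ha
  · simp [flux]
  · have hm1 : m - 1 ≠ 0 := sub_ne_zero.2 hm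
    rw [flux, abs_flux hm, ← Real.rpow_mul (abs_nonneg a),
      show (m - 1) * (m / (m - 1) - 2) = 2 - m by field_simp; ring, flux, ← mul_assoc,
      ← Real.rpow_add (abs_pos.2 ha), show 2 - m + (m - 2) = 0 by ring, Real.rpow_zero, one_mul]

lemma mul_flux_self {m : ℝ} (hm : m ≠ 0) (a : ℝ) : a * flux m a = |a| ^ m := by
  rcases eq_or_ne a 0 with rfl | ha
  · simp [flux, Real.zero_rpow hm]
  · rw [flux, show a * (|a| ^ (m - 2) * a) = |a| ^ (m - 2) * |a| ^ (2 : ℝ) by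
        rw [Real.rpow_two, sq_abs]; ring,
      ← Real.rpow_add (abs_pos.2 ha), sub_add_cancel]

lemma hasDerivAt_of_hasDerivAt_pow_mul {g : ℝ → ℝ} {r c : ℝ} {k : ℕ} (hr : r ≠ 0)
    (h : HasDerivAt (fun s => s ^ k * g s) (-(r ^ k * c)) r) :
    HasDerivAt g (-c - k / r * g r) r := by
  have hinv : HasDerivAt (fun s : ℝ => (s ^ k)⁻¹) (-(k * r ^ (k - 1)) / (r ^ k) ^ 2) r :=
    (hasDerivAt_pow k r).inv (pow_ne_zero k hr)
  have hg : (fun s => (s ^ k * g s) * (s ^ k)⁻¹) =ᶠ[𝓝 r] g := by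
    filter_upwards [eventually_ne_nhds hr] with s hs
    field_simp
  refine ((h.mul hinv).congr_of_eventuallyEq hg.symm).congr_deriv ?_
  rcases Nat.eq_zero_or_pos k with rfl | hk
  · simp
  · obtain ⟨j, rfl⟩ := Nat.exists_eq_add_of_lt hk
    simp only [zero_add, pow_succ]
    push_cast
    field_simp
    ring

def radialEnergy (m : ℝ) (F u u' : ℝ → ℝ) (r : ℝ) : ℝ := (m - 1) / m * |u' r| ^ m + F (u r)

lemma hasDerivAt_radialEnergy {m r : ℝ} {k : ℕ} {f F u u' : ℝ → ℝ} (hm : 1 < m) (hr : r ≠ 0)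
    (hF : HasDerivAt F (f (u r)) (u r)) (hu : HasDerivAt u (u' r) r)
    (heq : HasDerivAt (fun s => s ^ k * flux m (u' s)) (-(r ^ k * f (u r))) r) :
    HasDerivAt (radialEnergy m F u u') (-(k / r) * |u' r| ^ m) r := by
  have hm1 : m - 1 ≠ 0 := by linarith
  have hflux := hasDerivAt_of_hasDerivAt_pow_mul hr heq
  -- `|u'|^m = |flux m u'|^(m/(m-1))`, and `flux m u'` is differentiable by the equation
  have hpow := hasDerivAt_abs_rpow (flux m (u' r))
    (show 1 < m / (m - 1) by rw [lt_div_iff₀ (by linarith)]; linarith)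
  have hE : radialEnergy m F u u' =
      fun s => (m - 1) / m * |flux m (u' s)| ^ (m / (m - 1)) + F (u s) := by
    funext s
    rw [radialEnergy, abs_flux_rpow_conj hm.ne']
  rw [hE]
  refine (((hpow.comp r hflux).const_mul ((m - 1) / m)).add (hF.comp r hu)).congr_deriv ?_
  have hinv := flux_conj_flux hm.ne' (u' r)
  rw [flux] at hinv
  rw [mul_assoc (m / (m - 1)), hinv, ← mul_flux_self (by linarith : m ≠ 0)]
  field_simp
  ring

lemma exists_hasDerivAt_of_continuousOn_Ioi {f : ℝ → ℝ} (hf : ContinuousOn f (Ioi 0)) :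
    ∃ F : ℝ → ℝ, ∀ t, 0 < t → HasDerivAt F (f t) t := by
  refine ⟨fun t => ∫ x in (1 : ℝ)..t, f x, fun t ht => ?_⟩
  refine intervalIntegral.integral_hasDerivAt_right ?_
    (hf.stronglyMeasurableAtFilter isOpen_Ioi t ht) (hf.continuousAt (isOpen_Ioi.mem_nhds ht))
  refine (hf.mono fun x hx => ?_).intervalIntegrable
  rcases mem_uIcc.1 hx with ⟨h, _⟩ | ⟨h, _⟩
  · exact zero_lt_one.trans_le h
  · exact ht.trans_le h

namespace H1cond

variable {b : ℝ} {f F : ℝ → ℝ}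

lemma strictMonoOn_Ici (hf : H1cond b f) (hF : ∀ t, 0 < t → HasDerivAt F (f t) t) :
    StrictMonoOn F (Ici b) := by
  refine strictMonoOn_of_hasDerivWithinAt_pos (f' := f) (convex_Ici b)
    (fun t ht => (hF t (hf.1.trans_le ht)).continuousAt.continuousWithinAt) (fun t ht => ?_)
    (fun t ht => ?_) <;> rw [interior_Ici] at ht
  · exact (hF t (hf.1.trans ht)).hasDerivWithinAt
  · exact hf.2.2.2 t ht

lemma antitoneOn_Ioc (hf : H1cond b f) (hF : ∀ t, 0 < t → HasDerivAt F (f t) t) :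
    AntitoneOn F (Ioc 0 b) := by
  refine antitoneOn_of_hasDerivWithinAt_nonpos (f' := f) (convex_Ioc 0 b)
    (fun t ht => (hF t ht.1).continuousAt.continuousWithinAt) (fun t ht => ?_)
    (fun t ht => ?_) <;> rw [interior_Ioc] at ht
  · exact (hF t ht.1).hasDerivWithinAt
  · exact hf.2.2.1 t ht.1 ht.2.le

end H1cond

lemma domR_mem_nhds {R : EReal} {r : ℝ} (hr : 0 < r) (hrR : (r : EReal) < R) :
    domR R ∈ 𝓝 r :=
  mem_of_superset ((isOpen_Ioi.inter (isOpen_Iio.preimage continuous_coe_real_ereal)).mem_nhds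
    ⟨hr, hrR⟩) fun _ hx => ⟨le_of_lt hx.1, hx.2⟩

lemma Icc_subset_domR {R : EReal} {a c : ℝ} (ha : 0 ≤ a) (hc : c ∈ domR R) :
    Icc a c ⊆ domR R :=
  fun _ hx => ⟨ha.trans hx.1, (EReal.coe_le_coe_iff.2 hx.2).trans_lt hc.2⟩

lemma limR_neBot {R : EReal} (hR : ⊥ < R) : (limR R).NeBot := by
  refine comap_neBot fun T hT => ?_
  obtain ⟨V, hV, hVT⟩ := mem_nhdsWithin_iff_exists_mem_nhds_inter.1 hT
  obtain ⟨l, hlR, hIoc⟩ := exists_Ioc_subset_of_mem_nhds hV ⟨⊥, hR⟩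
  obtain ⟨z, hlz, hzR⟩ := EReal.exists_between_coe_real hlR
  exact ⟨z, hVT ⟨hIoc ⟨hlz, hzR.le⟩, hzR⟩⟩

lemma eventually_mem_Ioo_limR {R : EReal} {x : ℝ} (hx : (x : EReal) < R) :
    ∀ᶠ r : ℝ in limR R, (x : EReal) < r ∧ (r : EReal) < R :=
  preimage_mem_comap (Ioo_mem_nhdsLT hx)

namespace IsRadialSolution

variable {N : ℕ} {m : ℝ} {f F : ℝ → ℝ} {R : EReal} {u u' : ℝ → ℝ}

lemma pos (hu : IsRadialSolution N m f R u u') {r : ℝ} (hr : r ∈ domR R) : 0 < u r :=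
  hu.2.2.2.1 r hr

lemma continuousOn (hu : IsRadialSolution N m f R u u') : ContinuousOn u (domR R) :=
  fun r hr => (hu.2.1 r hr).continuousWithinAt

lemma hasDerivAt (hu : IsRadialSolution N m f R u u') {r : ℝ} (hr : 0 < r)
    (hrR : (r : EReal) < R) : HasDerivAt u (u' r) r :=
  (hu.2.1 r ⟨hr.le, hrR⟩).hasDerivAt (domR_mem_nhds hr hrR)

lemma exists_gt_lt (hu : IsRadialSolution N m f R u u') {x c : ℝ} (hx : (x : EReal) < R)
    (hc : 0 < c) : ∃ s, x < s ∧ (s : EReal) < R ∧ u s < c := by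
  obtain ⟨hR, -, -, -, -, -, hlim, -⟩ := hu
  have := limR_neBot (hR.trans' EReal.bot_lt_zero)
  obtain ⟨s, ⟨hxs, hsR⟩, hs⟩ :=
    ((eventually_mem_Ioo_limR hx).and (hlim.eventually_lt_const hc)).exists
  exact ⟨s, EReal.coe_lt_coe_iff.1 hxs, hsR, hs⟩

lemma hasDerivAt_radialEnergy (hu : IsRadialSolution N m f R u u') (hm : 1 < m)
    (hF : ∀ t, 0 < t → HasDerivAt F (f t) t) {r : ℝ} (hr : 0 < r) (hrR : (r : EReal) < R) :
    HasDerivAt (radialEnergy m F u u') (-((N - 1 : ℕ) / r) * |u' r| ^ m) r := by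
  refine _root_.hasDerivAt_radialEnergy hm hr.ne' (hF _ (hu.pos ⟨hr.le, hrR⟩))
    (hu.hasDerivAt hr hrR) ?_
  simpa only [flux, mul_assoc] using hu.2.2.2.2.2.1 r hr hrR

lemma continuousOn_radialEnergy (hu : IsRadialSolution N m f R u u') (hm : 1 < m)
    (hF : ∀ t, 0 < t → HasDerivAt F (f t) t) : ContinuousOn (radialEnergy m F u u') (domR R) :=
  (continuousOn_const.mul (hu.2.2.1.abs.rpow_const fun _ _ => Or.inr (by linarith))).add
    fun r hr => (hF _ (hu.pos hr)).continuousAt.comp_continuousWithinAt (hu.continuousOn r hr)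

lemma antitoneOn_radialEnergy (hu : IsRadialSolution N m f R u u') (hm : 1 < m)
    (hF : ∀ t, 0 < t → HasDerivAt F (f t) t) {a c : ℝ} (ha : 0 ≤ a) (hc : c ∈ domR R) :
    AntitoneOn (radialEnergy m F u u') (Icc a c) := by
  refine antitoneOn_of_hasDerivWithinAt_nonpos (convex_Icc a c)
    (f' := fun r => -((N - 1 : ℕ) / r) * |u' r| ^ m)
    ((hu.continuousOn_radialEnergy hm hF).mono (Icc_subset_domR ha hc)) (fun r hr => ?_)
    (fun r hr => ?_) <;> rw [interior_Icc] at hr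
  · exact (hu.hasDerivAt_radialEnergy hm hF (ha.trans_lt hr.1)
      ((EReal.coe_lt_coe_iff.2 hr.2).trans hc.2)).hasDerivWithinAt
  · have : 0 ≤ ((N - 1 : ℕ) : ℝ) / r := div_nonneg (Nat.cast_nonneg _) (ha.trans hr.1.le)
    have := Real.rpow_nonneg (abs_nonneg (u' r)) m
    nlinarith

lemma deriv_eq_zero_of_radialEnergy_le (hu : IsRadialSolution N m f R u u') (hm : 1 < m)
    (hN : 2 ≤ N) (hF : ∀ t, 0 < t → HasDerivAt F (f t) t) {a c : ℝ} (ha : 0 ≤ a)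
    (hc : c ∈ domR R) (hE : radialEnergy m F u u' a ≤ radialEnergy m F u u' c) :
    ∀ r ∈ Ioo a c, u' r = 0 := by
  intro r hr
  have hanti := hu.antitoneOn_radialEnergy hm hF ha hc
  have hconst : ∀ s ∈ Ioo a c, radialEnergy m F u u' s = radialEnergy m F u u' a := fun s hs =>
    le_antisymm (hanti ⟨le_rfl, hs.1.le.trans hs.2.le⟩ (Ioo_subset_Icc_self hs) hs.1.le)
      (hE.trans (hanti (Ioo_subset_Icc_self hs) ⟨hs.1.le.trans hs.2.le, le_rfl⟩ hs.2.le))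
  have hr0 : 0 < r := ha.trans_lt hr.1
  have hzero : HasDerivAt (radialEnergy m F u u') 0 r :=
    (hasDerivAt_const r _).congr_of_eventuallyEq
      (eventually_of_mem (isOpen_Ioo.mem_nhds hr) hconst)
  have hderiv := (hu.hasDerivAt_radialEnergy hm hF hr0
    ((EReal.coe_lt_coe_iff.2 hr.2).trans hc.2)).unique hzero
  have hk : ((N - 1 : ℕ) : ℝ) / r ≠ 0 := div_ne_zero (by norm_cast; omega) hr0.ne'
  simpa [hk, Real.rpow_eq_zero (abs_nonneg _) (by linarith : m ≠ 0)] using hderiv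

lemma eq_of_radialEnergy_le (hu : IsRadialSolution N m f R u u') (hm : 1 < m)
    (hN : 2 ≤ N) (hF : ∀ t, 0 < t → HasDerivAt F (f t) t) {a c : ℝ} (ha : 0 ≤ a)
    (hc : c ∈ domR R) (hE : radialEnergy m F u u' a ≤ radialEnergy m F u u' c) :
    ∀ r ∈ Ioc a c, u r = u a := by
  intro r hr
  obtain ⟨s, hs, hslope⟩ := exists_hasDerivAt_eq_slope u u' hr.1
    (hu.continuousOn.mono ((Icc_subset_Icc_right hr.2).trans (Icc_subset_domR ha hc)))
    (fun x hx => hu.hasDerivAt (ha.trans_lt hx.1)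
      ((EReal.coe_lt_coe_iff.2 (hx.2.trans_le hr.2)).trans hc.2))
  rw [hu.deriv_eq_zero_of_radialEnergy_le hm hN hF ha hc hE s ⟨hs.1, hs.2.trans_le hr.2⟩,
    eq_comm, div_eq_zero_iff, sub_eq_zero] at hslope
  exact hslope.resolve_right (sub_ne_zero.2 hr.1.ne')

end IsRadialSolution

theorem stmt9_general (N : ℕ) (m b : ℝ) (f : ℝ → ℝ) (hm : 1 < m)
    (hN2 : 2 ≤ N) (hf : H1cond b f)
    (R : EReal) (u u' : ℝ → ℝ) (hu : IsRadialSolution N m f R u u')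
    (r₀ : ℝ) (hr₀0 : 0 ≤ r₀)
    (hc : u' r₀ = 0) (hpos : 0 < u r₀) :
    ∀ r : ℝ, r₀ < r → (r : EReal) < R → u r ≤ u r₀ := by
  obtain ⟨F, hF⟩ := exists_hasDerivAt_of_continuousOn_Ioi hf.2.1
  have hE₀ : radialEnergy m F u u' r₀ = F (u r₀) := by
    simp [radialEnergy, hc, Real.zero_rpow (by linarith : m ≠ 0)]
  have hFE : ∀ s, F (u s) ≤ radialEnergy m F u u' s := fun s => le_add_of_nonneg_left
    (mul_nonneg (div_nonneg (by linarith) (by linarith)) (Real.rpow_nonneg (abs_nonneg _) m))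
  intro r hr hrR
  have hrD : r ∈ domR R := ⟨hr₀0.trans hr.le, hrR⟩
  by_contra! hgt
  rcases le_or_gt b (u r₀) with hb | hb
  · have hF_lt := hf.strictMonoOn_Ici hF hb (hb.trans hgt.le) hgt
    have hE_le := hu.antitoneOn_radialEnergy hm hF hr₀0 hrD (left_mem_Icc.2 hr.le)
      (right_mem_Icc.2 hr.le) hr.le
    linarith [hFE r]
  · obtain ⟨s, hrs, hsR, hs⟩ := hu.exists_gt_lt hrR hpos
    have hsD : s ∈ domR R := ⟨hr₀0.trans (hr.trans hrs).le, hsR⟩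
    have hF_le := hf.antitoneOn_Ioc hF ⟨hu.pos hsD, hs.le.trans hb.le⟩ ⟨hpos, hb.le⟩ hs.le
    have hu_eq := hu.eq_of_radialEnergy_le hm hN2 hF hr₀0 hsD (by linarith [hFE s])
      r ⟨hr, hrs.le⟩
    linarith

/-- for `m > 1`, `N ≥ 2`, under (H1), if a radial solution has an interior
critical point `r₀` with `u(r₀) > 0`, then `u(r) ≤ u(r₀)` for all `r ∈ (r₀, R)`. -/
theorem stmt9 (N : ℕ) (m b : ℝ) (f : ℝ → ℝ) (hm : 1 < m)
    (hN2 : 2 ≤ N) (hf : H1cond b f)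
    (R : EReal) (u u' : ℝ → ℝ) (hu : IsRadialSolution N m f R u u')
    (r₀ : ℝ) (hr₀0 : 0 ≤ r₀) (hr₀R : (r₀ : EReal) < R)
    (hc : u' r₀ = 0) (hpos : 0 < u r₀) :
    ∀ r : ℝ, r₀ < r → (r : EReal) < R → u r ≤ u r₀ :=
  stmt9_general N m b f hm hN2 hf R u u' hu r₀ hr₀0 hc hpos

end
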